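/- arXiv:2510.24489 — 3 statements merged into one kernel-verified Lean document; each statement's English description precedes it below -/
import Mathlib

section
/- Let C : H → H be β⁻¹-cocoercive with respect to S, meaning ⟨Cx − Cy, x − y⟩ ≥ β⁻¹ ‖Cx − Cy‖²_{S⁻¹} for all x, y ∈ H. Then for all x, y, z ∈ H, ⟨Cx − Cy, z − y⟩ ≥ −(β/4)‖z − x‖_S². -/
/-!
Write `z - y = (z - x) + (x - y)`. Cocoercivity bounds `⟪Cx - Cy, x - y⟫` below by
`β⁻¹ ‖Cx - Cy‖²_{S⁻¹}`, and Young's inequality in the `S`-geometry, applied to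
`a = S⁻¹(Cx - Cy)` and `z - x`, bounds `⟪Cx - Cy, z - x⟫ = ⟪S a, z - x⟫` below by
`-β⁻¹ ‖a‖²_S - (β/4) ‖z - x‖²_S`; the two `β⁻¹` terms cancel since `‖a‖²_S = ‖Cx - Cy‖²_{S⁻¹}`.
-/

open RealInnerProductSpace

theorem LinearMap.IsPositive.neg_inner_le {H : Type*} [NormedAddCommGroup H]
    [InnerProductSpace ℝ H] {T : H →ₗ[ℝ] H} (hT : T.IsPositive) {β : ℝ} (hβ : 0 < β) (a w : H) :
    -⟪T a, w⟫ ≤ β⁻¹ * ⟪T a, a⟫ + β / 4 * ⟪T w, w⟫ := by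
  have hsq := hT.inner_nonneg_left (a + (β / 2) • w)
  have hexpand : ⟪T (a + (β / 2) • w), a + (β / 2) • w⟫
      = ⟪T a, a⟫ + β * ⟪T a, w⟫ + β ^ 2 / 4 * ⟪T w, w⟫ := by
    simp only [map_add, map_smul, inner_add_left, inner_add_right, real_inner_smul_left,
      real_inner_smul_right, hT.isSymmetric w a, real_inner_comm (T a) w]
    ring
  rw [hexpand] at hsq
  rw [← mul_le_mul_iff_of_pos_left hβ]
  field_simp
  nlinarith

theorem stmt_4_general {H : Type*} [NormedAddCommGroup H] [InnerProductSpace ℝ H]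
    (S Sinv : H →L[ℝ] H)
    (hsa : ∀ x y : H, ⟪S x, y⟫ = ⟪x, S y⟫)
    (m : ℝ) (hm : 0 < m) (hpos : ∀ x : H, m * ‖x‖ ^ 2 ≤ ⟪S x, x⟫)
    (hinv₂ : ∀ x : H, S (Sinv x) = x)
    (β : ℝ) (hβ : 0 < β) (C : H → H)
    (hcoco : ∀ x y : H, β⁻¹ * ⟪Sinv (C x - C y), C x - C y⟫ ≤ ⟪C x - C y, x - y⟫) :
    ∀ x y z : H, -(β / 4) * ⟪S (z - x), z - x⟫ ≤ ⟪C x - C y, z - y⟫ := by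
  intro x y z
  have hS : (S : H →ₗ[ℝ] H).IsPositive :=
    (LinearMap.isPositive_iff _).mpr ⟨hsa, fun v => (hpos v).trans' (by positivity)⟩
  set u := C x - C y
  have hyoung := hS.neg_inner_le hβ (Sinv u) (z - x)
  simp only [ContinuousLinearMap.coe_coe, hinv₂, real_inner_comm (Sinv u)] at hyoung
  have hsplit : ⟪u, z - y⟫ = ⟪u, z - x⟫ + ⟪u, x - y⟫ := by
    rw [← inner_add_right, sub_add_sub_cancel]
  linarith [hcoco x y]

theorem stmt_4 {H : Type*} [NormedAddCommGroup H] [InnerProductSpace ℝ H] [CompleteSpace H]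
    (S Sinv : H →L[ℝ] H)
    (hsa : ∀ x y : H, ⟪S x, y⟫ = ⟪x, S y⟫)
    (m : ℝ) (hm : 0 < m) (hpos : ∀ x : H, m * ‖x‖ ^ 2 ≤ ⟪S x, x⟫)
    (hinv₁ : ∀ x : H, Sinv (S x) = x) (hinv₂ : ∀ x : H, S (Sinv x) = x)
    (β : ℝ) (hβ : 0 < β) (C : H → H)
    (hcoco : ∀ x y : H, β⁻¹ * ⟪Sinv (C x - C y), C x - C y⟫ ≤ ⟪C x - C y, x - y⟫) :
    ∀ x y z : H, -(β / 4) * ⟪S (z - x), z - x⟫ ≤ ⟪C x - C y, z - y⟫ :=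
  stmt_4_general S Sinv hsa m hm hpos hinv₂ β hβ C hcoco
end

section
/- Let M : H → H be a map such that γM − S is L-Lipschitz continuous with respect to S for some L ∈ [0,1) and γ > 0. Then M is strongly monotone with respect to S: for all x, y ∈ H, ⟨Mx − My, x − y⟩ ≥ ((1 − L)/γ)‖x − y‖_S². -/
/-!
Put `u = (γM − S)x − (γM − S)y` and `w = x − y`. Since `⟪u, w⟫ = ⟪S⁻¹u, Sw⟫`, the Cauchy–Schwarz
inequality for the semi-inner product `⟪S⁻¹·, ·⟫` bounds `|⟪u, w⟫|` by `‖u‖_{S⁻¹} ‖w‖_S`, which the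
Lipschitz hypothesis bounds by `L ‖w‖_S²`. As `⟪u, w⟫ = γ⟪Mx − My, w⟫ − ‖w‖_S²`, this is the claim.
-/

open RealInnerProductSpace

section

variable {H : Type*} [NormedAddCommGroup H] [InnerProductSpace ℝ H]

lemma inner_map_mul_inner_map_le (T : H →L[ℝ] H) (hT : ∀ x, 0 ≤ ⟪T x, x⟫) (x y : H) :
    ⟪T x, y⟫ * ⟪T y, x⟫ ≤ ⟪T x, x⟫ * ⟪T y, y⟫ :=
  LinearMap.BilinForm.apply_mul_apply_le_of_forall_zero_le
    ((innerₗ H).compl₁₂ T.toLinearMap LinearMap.id) hT x y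

lemma inner_inverse_self_nonneg {S Sinv : H →L[ℝ] H} (hS : ∀ x, 0 ≤ ⟪S x, x⟫)
    (hinv₂ : ∀ x : H, S (Sinv x) = x) (x : H) : 0 ≤ ⟪Sinv x, x⟫ := by
  simpa only [hinv₂, real_inner_comm x] using hS (Sinv x)

lemma abs_inner_le_sqrt_inverse_mul_sqrt {S Sinv : H →L[ℝ] H}
    (hsa : ∀ x y : H, ⟪S x, y⟫ = ⟪x, S y⟫) (hS : ∀ x, 0 ≤ ⟪S x, x⟫)
    (hinv₁ : ∀ x : H, Sinv (S x) = x) (hinv₂ : ∀ x : H, S (Sinv x) = x) (u w : H) :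
    |⟪u, w⟫| ≤ √⟪Sinv u, u⟫ * √⟪S w, w⟫ := by
  have hcs := inner_map_mul_inner_map_le Sinv (inner_inverse_self_nonneg hS hinv₂) u (S w)
  have hpair : ⟪Sinv u, S w⟫ = ⟪u, w⟫ := by rw [← hsa, hinv₂]
  rw [hpair, hinv₁, real_inner_comm u, real_inner_comm (S w), ← sq] at hcs
  rw [← Real.sqrt_mul (inner_inverse_self_nonneg hS hinv₂ u)]
  exact Real.abs_le_sqrt hcs

end

theorem stmt_7_general {H : Type*} [NormedAddCommGroup H] [InnerProductSpace ℝ H]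
    (S Sinv : H →L[ℝ] H)
    (hsa : ∀ x y : H, ⟪S x, y⟫ = ⟪x, S y⟫)
    (m : ℝ) (hm : 0 < m) (hpos : ∀ x : H, m * ‖x‖ ^ 2 ≤ ⟪S x, x⟫)
    (hinv₁ : ∀ x : H, Sinv (S x) = x) (hinv₂ : ∀ x : H, S (Sinv x) = x)
    (M : H → H) (γ L : ℝ) (hγ : 0 < γ)
    (hlip : ∀ x y : H,
      Real.sqrt ⟪Sinv ((γ • M x - S x) - (γ • M y - S y)),
        (γ • M x - S x) - (γ • M y - S y)⟫ ≤ L * Real.sqrt ⟪S (x - y), x - y⟫) :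
    ∀ x y : H, ((1 - L) / γ) * ⟪S (x - y), x - y⟫ ≤ ⟪M x - M y, x - y⟫ := by
  intro x y
  have hS : ∀ z, 0 ≤ ⟪S z, z⟫ := fun z => le_trans (by positivity) (hpos z)
  set u := (γ • M x - S x) - (γ • M y - S y)
  set w := x - y
  have hu : ⟪u, w⟫ = γ * ⟪M x - M y, w⟫ - ⟪S w, w⟫ := by
    have : u = γ • (M x - M y) - S w := by
      simp only [u, w, smul_sub, map_sub]
      abel
    rw [this, inner_sub_left, real_inner_smul_left]
  have hbound : -⟪u, w⟫ ≤ L * ⟪S w, w⟫ :=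
    calc -⟪u, w⟫ ≤ |⟪u, w⟫| := neg_le_abs _
      _ ≤ √⟪Sinv u, u⟫ * √⟪S w, w⟫ :=
        abs_inner_le_sqrt_inverse_mul_sqrt hsa hS hinv₁ hinv₂ u w
      _ ≤ L * √⟪S w, w⟫ * √⟪S w, w⟫ := by gcongr; exact hlip x y
      _ = L * ⟪S w, w⟫ := by rw [mul_assoc, Real.mul_self_sqrt (hS w)]
  rw [div_mul_eq_mul_div, div_le_iff₀ hγ]
  linarith

theorem stmt_7 {H : Type*} [NormedAddCommGroup H] [InnerProductSpace ℝ H] [CompleteSpace H]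
    (S Sinv : H →L[ℝ] H)
    (hsa : ∀ x y : H, ⟪S x, y⟫ = ⟪x, S y⟫)
    (m : ℝ) (hm : 0 < m) (hpos : ∀ x : H, m * ‖x‖ ^ 2 ≤ ⟪S x, x⟫)
    (hinv₁ : ∀ x : H, Sinv (S x) = x) (hinv₂ : ∀ x : H, S (Sinv x) = x)
    (M : H → H) (γ L : ℝ) (hγ : 0 < γ) (hL0 : 0 ≤ L) (hL1 : L < 1)
    (hlip : ∀ x y : H,
      Real.sqrt ⟪Sinv ((γ • M x - S x) - (γ • M y - S y)),
        (γ • M x - S x) - (γ • M y - S y)⟫ ≤ L * Real.sqrt ⟪S (x - y), x - y⟫) :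
    ∀ x y : H, ((1 - L) / γ) * ⟪S (x - y), x - y⟫ ≤ ⟪M x - M y, x - y⟫ :=
  stmt_7_general S Sinv hsa m hm hpos hinv₁ hinv₂ M γ L hγ hlip
end

section
/- Let p ∈ (0,1), and suppose constants L ≥ 0, α ≥ 0, θ > 0, β > 0, μ ≥ 0 with μ ≤ θ and L + α ≤ (1 − √p)/4, and γ = min{√p/(2θ), p/β, α/(Lθ)} (with the last term interpreted as +∞ if L = 0). Then p − γ²θ² − γβ/2 − p(γLθ + L) − 2γ³θ²μ ≥ p(1 − √p)/4 − (L + α)p ≥ 0. -/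
/-! With `s = √p`, the three caps on `γ` give `γθ ≤ s/2`, `γβ ≤ p` and `γLθ ≤ α`. Hence
`γ²θ² ≤ p/4`, `γβ/2 ≤ p/2`, `pγLθ ≤ pα` and, using `μ ≤ θ`,
`2γ³θ²μ ≤ 2(γθ)³ ≤ s³/4 = ps/4`; subtracting these from `p` leaves `p(1 - s)/4 - (L + α)p`. -/

lemma nonneg_and_le_of_eq_ite_min {L a b c γ : ℝ} (ha : 0 ≤ a) (hb : 0 ≤ b) (hc : 0 ≤ c)
    (hγ : γ = if L = 0 then min a b else min (min a b) c) :
    0 ≤ γ ∧ γ ≤ a ∧ γ ≤ b ∧ (L ≠ 0 → γ ≤ c) := by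
  subst hγ
  split_ifs with hL
  · exact ⟨le_min ha hb, min_le_left _ _, min_le_right _ _, absurd hL⟩
  · exact ⟨le_min (le_min ha hb) hc, (min_le_left _ _).trans (min_le_left _ _),
      (min_le_left _ _).trans (min_le_right _ _), fun _ => min_le_right _ _⟩

lemma descent_bound {p s L α θ β μ γ : ℝ} (hsp : s ^ 2 = p) (hθ : 0 ≤ θ)
    (hμθ : μ ≤ θ) (hγ0 : 0 ≤ γ) (hγθ : γ * θ ≤ s / 2) (hγβ : γ * β ≤ p)
    (hγLθ : γ * L * θ ≤ α) :
    p * (1 - s) / 4 - (L + α) * p ≤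
      p - γ ^ 2 * θ ^ 2 - γ * β / 2 - p * (γ * L * θ + L) - 2 * γ ^ 3 * θ ^ 2 * μ := by
  have hp : 0 ≤ p := hsp ▸ sq_nonneg s
  have hγθ0 : 0 ≤ γ * θ := mul_nonneg hγ0 hθ
  have hsq : γ ^ 2 * θ ^ 2 ≤ p / 4 := by
    calc γ ^ 2 * θ ^ 2 = (γ * θ) ^ 2 := by ring
      _ ≤ (s / 2) ^ 2 := pow_le_pow_left₀ hγθ0 hγθ 2
      _ = p / 4 := by rw [← hsp]; ring
  have hcube : 2 * γ ^ 3 * θ ^ 2 * μ ≤ p * s / 4 := by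
    calc 2 * γ ^ 3 * θ ^ 2 * μ ≤ 2 * γ ^ 3 * θ ^ 2 * θ := by gcongr
      _ = 2 * (γ * θ) ^ 3 := by ring
      _ ≤ 2 * (s / 2) ^ 3 := by gcongr
      _ = p * s / 4 := by rw [← hsp]; ring
  have hLθ : p * (γ * L * θ) ≤ p * α := mul_le_mul_of_nonneg_left hγLθ hp
  linarith

theorem stmt_19_general (p L α θ β μ γ : ℝ)
    (hp0 : 0 < p) (hL : 0 ≤ L) (hα : 0 ≤ α) (hθ : 0 < θ) (hβ : 0 < β)
    (hμθ : μ ≤ θ) (hLα : L + α ≤ (1 - Real.sqrt p) / 4)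
    (hγ : γ = if L = 0 then min (Real.sqrt p / (2 * θ)) (p / β)
      else min (min (Real.sqrt p / (2 * θ)) (p / β)) (α / (L * θ))) :
    p * (1 - Real.sqrt p) / 4 - (L + α) * p ≤
        p - γ ^ 2 * θ ^ 2 - γ * β / 2 - p * (γ * L * θ + L) - 2 * γ ^ 3 * θ ^ 2 * μ ∧
      0 ≤ p * (1 - Real.sqrt p) / 4 - (L + α) * p := by
  obtain ⟨hγ0, hγs, hγp, hγα⟩ := nonneg_and_le_of_eq_ite_min (by positivity)
    (div_nonneg hp0.le hβ.le) (div_nonneg hα (mul_nonneg hL hθ.le)) hγ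
  have hγθ : γ * θ ≤ Real.sqrt p / 2 := by
    rw [le_div_iff₀ (by positivity)] at hγs
    linarith
  have hγβ : γ * β ≤ p := (le_div_iff₀ hβ).mp hγp
  have hγLθ : γ * L * θ ≤ α := by
    rcases hL.eq_or_lt with rfl | hL
    · simpa using hα
    · rw [mul_assoc]
      exact (le_div_iff₀ (by positivity)).mp (hγα hL.ne')
  refine ⟨descent_bound (Real.sq_sqrt hp0.le) hθ.le hμθ hγ0 hγθ hγβ hγLθ, ?_⟩
  linarith [mul_le_mul_of_nonneg_left hLα hp0.le]

theorem stmt_19 (p L α θ β μ γ : ℝ)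
    (hp0 : 0 < p) (hp1 : p < 1) (hL : 0 ≤ L) (hα : 0 ≤ α) (hθ : 0 < θ) (hβ : 0 < β)
    (hμ0 : 0 ≤ μ) (hμθ : μ ≤ θ) (hLα : L + α ≤ (1 - Real.sqrt p) / 4)
    (hγ : γ = if L = 0 then min (Real.sqrt p / (2 * θ)) (p / β)
      else min (min (Real.sqrt p / (2 * θ)) (p / β)) (α / (L * θ))) :
    p * (1 - Real.sqrt p) / 4 - (L + α) * p ≤
        p - γ ^ 2 * θ ^ 2 - γ * β / 2 - p * (γ * L * θ + L) - 2 * γ ^ 3 * θ ^ 2 * μ ∧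
      0 ≤ p * (1 - Real.sqrt p) / 4 - (L + α) * p :=
  stmt_19_general p L α θ β μ γ hp0 hL hα hθ hβ hμθ hLα hγ
end
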